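/- Let λ ∈ M_n(ℂ) with |λ(α,β)| = 1 for all α, β. Define v_{α,β} = n^{-1/2} Σ_{j=0}^{n-1} φ_n^{α(j-β)} e_{(j-β) mod n} ⊗ e_j with φ_n = exp(2πi/n). Then {v_{α,β}}_{α,β=0}^{n-1} is an orthonormal basis of ℂ^n ⊗ ℂ^n, and D_λ = Σ_{α,β} λ(α,β) v_{α,β} v_{α,β}^* is unitary with operator Schmidt rank Ω(D_λ) = |{(a,b) ∈ {0,...,n-1}² : λ̂(a,b) ≠ 0}|, where λ̂(a,b) = (1/n) Σ_{α,β} exp((2πi/n)(aα + bβ)) λ(α,β). -/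

import Mathlib

open Matrix Kronecker

/-- The realignment (reshuffling) of a bipartite operator. -/
def realign {n m : ℕ} (X : Matrix (Fin n × Fin m) (Fin n × Fin m) ℂ) :
    Matrix (Fin n × Fin n) (Fin m × Fin m) ℂ :=
  Matrix.of fun p q => X (p.1, q.1) (p.2, q.2)

/-- The operator Schmidt rank of a bipartite operator, i.e. the rank
of its realignment. -/
noncomputable def osr {n m : ℕ} (X : Matrix (Fin n × Fin m) (Fin n × Fin m) ℂ) : ℕ :=
  (realign X).rank

/-- The Fourier-basis vector `v_{α,β} = n^{-1/2} Σ_j φ_n^{α(j-β)} e_{j-β mod n} ⊗ e_j`. -/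
noncomputable def fVec (n : ℕ) (a b : Fin n) : Fin n × Fin n → ℂ :=
  fun p =>
    if (p.1 : ZMod n) = (p.2 : ZMod n) - (b : ZMod n) then
      (1 / Real.sqrt n) *
        Complex.exp (2 * Real.pi * Complex.I *
          (((a.val : ℤ) * ((p.2.val : ℤ) - (b.val : ℤ)) : ℤ) : ℂ) / n)
    else 0

/-- The unitary `D_λ = Σ_{α,β} λ(α,β) v_{α,β} v_{α,β}^*`. -/
noncomputable def Dlam {n : ℕ} (lam : Fin n → Fin n → ℂ) :
    Matrix (Fin n × Fin n) (Fin n × Fin n) ℂ :=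
  Matrix.of fun p q =>
    ∑ a : Fin n, ∑ b : Fin n, lam a b * fVec n a b p * (starRingEnd ℂ) (fVec n a b q)

/-- The discrete Fourier transform `λ̂(a,b) = (1/n) Σ_{α,β} exp((2πi/n)(aα+bβ)) λ(α,β)`. -/
noncomputable def lamHat {n : ℕ} (lam : Fin n → Fin n → ℂ) (a b : Fin n) : ℂ :=
  (1 / n) * ∑ x : Fin n, ∑ y : Fin n,
    Complex.exp (2 * Real.pi * Complex.I * ((a.val * x.val + b.val * y.val : ℕ) : ℂ) / n)
      * lam x y

/-! With `𝕖 = ZMod.stdAddChar`, `v_{a,b}(i,j) = n^{-1/2} [j - i = b] 𝕖(a i)`. Orthogonality of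
characters makes the `v_{a,b}` orthonormal, so `D_λ = V diag(λ) V*` with `V` unitary. Realigning
the projector `v_{x,y} v_{x,y}*` gives `(1/n) Σ_{a,b} 𝕖(b x + a y) v_{a,b} v_{a,b}*` with the two
tensor factors swapped; summing against `λ`, the realignment of `D_λ` is `D_μ`, factors swapped,
for `μ(a,b) = λ̂(b,a)`. Hence `Ω(D_λ) = rank D_μ = #{μ ≠ 0}`. -/
local notation "𝕖" => ZMod.stdAddChar

open scoped ComplexConjugate

noncomputable def fVecMatrix (n : ℕ) : Matrix (Fin n × Fin n) (Fin n × Fin n) ℂ :=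
  Matrix.of fun p ab => fVec n ab.1 ab.2 p

lemma Dlam_eq_fVecMatrix_mul_diagonal {n : ℕ} (μ : Fin n → Fin n → ℂ) :
    Dlam μ = fVecMatrix n * diagonal (fun ab => μ ab.1 ab.2) * (fVecMatrix n)ᴴ := by
  ext p q
  rw [mul_apply]
  simp only [Dlam, fVecMatrix, mul_diagonal, conjTranspose_apply, of_apply,
    Fintype.sum_prod_type, RCLike.star_def]
  exact Finset.sum_congr rfl fun a _ => Finset.sum_congr rfl fun b _ => by ring

section

variable {n : ℕ} [NeZero n]

lemma Fin.natCast_zmod_bijective : Function.Bijective (fun i : Fin n => (i : ZMod n)) := by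
  refine (Fintype.bijective_iff_injective_and_card _).mpr ⟨fun i j hij => ?_, by simp⟩
  simpa [ZMod.val_cast_of_lt i.isLt, ZMod.val_cast_of_lt j.isLt, Fin.ext_iff]
    using congrArg ZMod.val hij

lemma Fin.natCast_zmod_inj {i j : Fin n} : (i : ZMod n) = j ↔ i = j :=
  Fin.natCast_zmod_bijective.1.eq_iff

variable (n) in
noncomputable def finEquivZMod : Fin n ≃ ZMod n :=
  Equiv.ofBijective _ Fin.natCast_zmod_bijective

@[simp]
lemma natCast_finEquivZMod_symm (c : ZMod n) : (((finEquivZMod n).symm c : Fin n) : ZMod n) = c :=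
  (finEquivZMod n).apply_symm_apply c

lemma sum_fin_stdAddChar_mul (m : ZMod n) :
    ∑ a : Fin n, 𝕖 (a * m : ZMod n) = if m = 0 then (n : ℂ) else 0 := by
  rw [Fintype.sum_bijective _ Fin.natCast_zmod_bijective _ (fun x => 𝕖 (x * m)) fun _ => rfl,
    AddChar.sum_mulShift _ (ZMod.isPrimitive_stdAddChar n), ZMod.card, Nat.cast_ite,
    Nat.cast_zero]

lemma sum_fin_ite_eq_and_eq {M : Type*} [AddCommMonoid M] (c d : ZMod n) (g : Fin n → M) :
    ∑ b : Fin n, (if c = b ∧ d = b then g b else 0) =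
      if c = d then g ((finEquivZMod n).symm c) else 0 := by
  split_ifs with hcd
  · have hc : ∀ b : Fin n, c = b ↔ (finEquivZMod n).symm c = b := fun b =>
      ((finEquivZMod n).symm_apply_eq).symm
    simp only [← hcd, and_self, hc, Finset.sum_ite_eq, Finset.mem_univ, if_true]
  · exact Finset.sum_eq_zero fun b _ => if_neg fun h => hcd (h.1.trans h.2.symm)

lemma fVec_apply (a b i j : Fin n) :
    fVec n a b (i, j) =
      if (j - i : ZMod n) = b then 1 / Real.sqrt n * 𝕖 (a * i : ZMod n) else 0 := by
  have hcond : (i : ZMod n) = j - b ↔ (j - i : ZMod n) = b := by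
    constructor <;> intro h <;> linear_combination -h
  simp only [fVec, hcond]
  split_ifs with h
  · rw [← ZMod.stdAddChar_coe]
    push_cast
    rw [← h, sub_sub_cancel]
  · rfl

lemma fVec_mul_conj_fVec (a b a' b' i j k l : Fin n) :
    fVec n a b (i, j) * conj (fVec n a' b' (k, l)) =
      if (j - i : ZMod n) = b ∧ (l - k : ZMod n) = b' then
        1 / n * 𝕖 (a * i - a' * k : ZMod n)
      else 0 := by
  rw [fVec_apply, fVec_apply, apply_ite conj, map_zero, ite_zero_mul_ite_zero]
  refine if_congr Iff.rfl ?_ rfl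
  have hsqrt : (Real.sqrt n : ℂ) ^ 2 = n := by
    rw [← Complex.ofReal_pow, Real.sq_sqrt n.cast_nonneg, Complex.ofReal_natCast]
  rw [map_mul (starRingEnd ℂ), map_div₀, map_one, Complex.conj_ofReal,
    ← AddChar.map_neg_eq_conj, sub_eq_add_neg, AddChar.map_add_eq_mul, ← neg_mul]
  field_simp
  rw [hsqrt]

lemma sum_fVec_mul_conj_fVec (a b a' b' : Fin n) :
    ∑ p, fVec n a b p * conj (fVec n a' b' p) = if (a, b) = (a', b') then 1 else 0 := by
  have hcond : ∀ i j : Fin n, ((j - i : ZMod n) = b ∧ (j - i : ZMod n) = b') ↔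
      ((b + i : ZMod n) = j ∧ (b' + i : ZMod n) = j) := fun i j => by
    constructor <;> rintro ⟨h, h'⟩ <;> exact ⟨by linear_combination -h, by linear_combination -h'⟩
  simp only [Fintype.sum_prod_type, fVec_mul_conj_fVec, hcond, sum_fin_ite_eq_and_eq, add_left_inj,
    Fin.natCast_zmod_inj, Prod.mk.injEq, ← sub_mul]
  by_cases hb : b = b'
  · simp only [hb, if_true, and_true, ← Finset.mul_sum]
    simp_rw [mul_comm _ ((_ : Fin n) : ZMod n)]
    simp only [sum_fin_stdAddChar_mul, sub_eq_zero, Fin.natCast_zmod_inj]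
    split_ifs <;> simp
  · simp [hb]

lemma orthonormal_fVec :
    Orthonormal ℂ (fun ab : Fin n × Fin n =>
      ((WithLp.equiv 2 (Fin n × Fin n → ℂ)).symm (fVec n ab.1 ab.2) :
        EuclideanSpace ℂ (Fin n × Fin n))) := by
  rw [orthonormal_iff_ite]
  rintro ⟨a, b⟩ ⟨a', b'⟩
  simp only [PiLp.inner_apply, RCLike.inner_apply]
  exact (sum_fVec_mul_conj_fVec a' b' a b).trans (if_congr eq_comm rfl rfl)

lemma fVecMatrix_mem_unitaryGroup : fVecMatrix n ∈ unitaryGroup (Fin n × Fin n) ℂ := by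
  rw [mem_unitaryGroup_iff']
  ext ⟨a, b⟩ ⟨a', b'⟩
  simp only [fVecMatrix, mul_apply, star_apply, of_apply, RCLike.star_def, one_apply,
    mul_comm (conj _)]
  exact (sum_fVec_mul_conj_fVec a' b' a b).trans (if_congr eq_comm rfl rfl)

lemma Dlam_mem_unitaryGroup {μ : Fin n → Fin n → ℂ} (hμ : ∀ a b, ‖μ a b‖ = 1) :
    Dlam μ ∈ unitaryGroup (Fin n × Fin n) ℂ := by
  have hdiag : diagonal (fun ab : Fin n × Fin n => μ ab.1 ab.2) ∈ unitaryGroup _ ℂ := by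
    rw [mem_unitaryGroup_iff, star_eq_conjTranspose, diagonal_conjTranspose,
      diagonal_mul_diagonal, ← diagonal_one]
    congr 1
    ext ab
    simp [Complex.mul_conj, Complex.normSq_eq_norm_sq, hμ]
  rw [Dlam_eq_fVecMatrix_mul_diagonal, ← star_eq_conjTranspose]
  exact mul_mem (mul_mem fVecMatrix_mem_unitaryGroup hdiag)
    (Unitary.star_mem fVecMatrix_mem_unitaryGroup)

lemma rank_Dlam (μ : Fin n → Fin n → ℂ) :
    (Dlam μ).rank = Fintype.card {ab : Fin n × Fin n // μ ab.1 ab.2 ≠ 0} := by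
  classical
  have hV := fVecMatrix_mem_unitaryGroup (n := n)
  rw [Dlam_eq_fVecMatrix_mul_diagonal, ← star_eq_conjTranspose,
    rank_mul_eq_left_of_isUnit_det _ _ (isUnit_det_of_left_inverse (mem_unitaryGroup_iff.mp hV)),
    rank_mul_eq_right_of_isUnit_det _ _ (isUnit_det_of_left_inverse (mem_unitaryGroup_iff'.mp hV)),
    rank_diagonal]

lemma lamHat_apply (lam : Fin n → Fin n → ℂ) (a b : Fin n) :
    lamHat lam a b = 1 / n * ∑ x : Fin n, ∑ y : Fin n, 𝕖 (a * x + b * y : ZMod n) * lam x y := by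
  have hexp : ∀ m : ℕ, Complex.exp (2 * Real.pi * Complex.I * m / n) = 𝕖 (m : ZMod n) :=
    fun m => by simpa using (ZMod.stdAddChar_coe (N := n) m).symm
  simp only [lamHat, hexp]
  push_cast
  rfl

lemma fVec_mul_conj_fVec_eq_sum (x y i j k l : Fin n) :
    fVec n x y (i, j) * conj (fVec n x y (k, l)) =
      1 / n * ∑ a : Fin n, ∑ b : Fin n,
        𝕖 (b * x + a * y : ZMod n) * (fVec n a b (k, i) * conj (fVec n a b (l, j))) := by
  simp only [fVec_mul_conj_fVec, mul_ite, mul_zero, sum_fin_ite_eq_and_eq,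
    natCast_finEquivZMod_symm]
  by_cases h : (i - k : ZMod n) = j - l
  · have hcond : ((j - i : ZMod n) = y ∧ (l - k : ZMod n) = y) ↔ (y + k - l : ZMod n) = 0 :=
      ⟨fun ⟨_, h₂⟩ => by linear_combination -h₂,
        fun h' => ⟨by linear_combination -h - h', by linear_combination -h'⟩⟩
    have hterm : ∀ a : Fin n,
        𝕖 ((i - k) * x + a * y : ZMod n) * (1 / n * 𝕖 (a * k - a * l : ZMod n)) =
          1 / n * 𝕖 ((i - k) * x : ZMod n) * 𝕖 (a * (y + k - l) : ZMod n) := fun a => by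
      rw [mul_left_comm, mul_assoc, ← AddChar.map_add_eq_mul, ← AddChar.map_add_eq_mul]
      ring_nf
    simp only [if_pos h, hterm, ← Finset.mul_sum, sum_fin_stdAddChar_mul]
    simp only [hcond]
    split_ifs
    · rw [mul_comm (_ - _) (x : ZMod n), mul_sub]
      field_simp
    · simp
  · rw [if_neg fun ⟨h₁, h₂⟩ => h (by linear_combination h₂ - h₁)]
    simp [h]

lemma realign_Dlam (lam : Fin n → Fin n → ℂ) :
    realign (Dlam lam) =
      (Dlam fun a b => lamHat lam b a).submatrix (Equiv.prodComm _ _) (Equiv.prodComm _ _) := by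
  ext ⟨i, k⟩ ⟨j, l⟩
  simp only [realign, Dlam, submatrix_apply, of_apply, Equiv.prodComm_apply, Prod.swap_prod_mk]
  rw [Finset.sum_congr rfl fun x _ => Finset.sum_congr rfl fun y _ => by
    rw [mul_assoc, fVec_mul_conj_fVec_eq_sum]]
  simp only [lamHat_apply, Finset.mul_sum, Finset.sum_mul]
  simp only [← Fintype.sum_prod_type']
  refine Fintype.sum_equiv ((Equiv.prodAssoc _ _ _).symm.trans
    ((Equiv.prodComm _ _).trans (Equiv.prodAssoc _ _ _))) _ _ fun _ => ?_
  simp only [Equiv.trans_apply, Equiv.prodAssoc_symm_apply, Equiv.prodComm_apply,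
    Equiv.prodAssoc_apply, Prod.swap_prod_mk]
  ring

lemma osr_Dlam (lam : Fin n → Fin n → ℂ) :
    osr (Dlam lam) = {ab : Fin n × Fin n | lamHat lam ab.1 ab.2 ≠ 0}.ncard := by
  rw [osr, realign_Dlam, rank_submatrix, rank_Dlam, ← Nat.card_eq_fintype_card,
    ← Nat.card_coe_set_eq]
  exact Nat.card_congr ((Equiv.prodComm _ _).subtypeEquiv fun _ => Iff.rfl)

end

/-- Tyson's Fourier construction: `{v_{α,β}}` is an orthonormal basis, `D_λ` is
unitary, and its operator Schmidt rank is the number of nonvanishing Fourier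
coefficients of `λ`. -/
theorem stmt18 {n : ℕ} (lam : Fin n → Fin n → ℂ)
    (hlam : ∀ a b, ‖lam a b‖ = 1) :
    Orthonormal ℂ (fun ab : Fin n × Fin n =>
      ((WithLp.equiv 2 (Fin n × Fin n → ℂ)).symm (fVec n ab.1 ab.2) : EuclideanSpace ℂ (Fin n × Fin n))) ∧
    Submodule.span ℂ (Set.range (fun ab : Fin n × Fin n =>
      ((WithLp.equiv 2 (Fin n × Fin n → ℂ)).symm (fVec n ab.1 ab.2) : EuclideanSpace ℂ (Fin n × Fin n)))) = ⊤ ∧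
    Dlam lam ∈ Matrix.unitaryGroup (Fin n × Fin n) ℂ ∧
    osr (Dlam lam) = {ab : Fin n × Fin n | lamHat lam ab.1 ab.2 ≠ 0}.ncard := by
  obtain rfl | _ := eq_zero_or_neZero n
  · refine ⟨orthonormal_iff_ite.mpr fun ab => ab.1.elim0, Subsingleton.elim _ _,
      mem_unitaryGroup_iff.mpr (Subsingleton.elim _ _), ?_⟩
    rw [osr, Subsingleton.elim (realign (Dlam lam)) 0, rank_zero,
      Set.eq_empty_of_isEmpty {ab : Fin 0 × Fin 0 | _}, Set.ncard_empty]
  · refine ⟨orthonormal_fVec, ?_, Dlam_mem_unitaryGroup hlam, osr_Dlam lam⟩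
    exact orthonormal_fVec.linearIndependent.span_eq_top_of_card_eq_finrank'
      (finrank_euclideanSpace).symm
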